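/- arXiv:2303.10636 — 2 statements merged into one kernel-verified Lean document; each statement's English description precedes it below -/
import Mathlib

section
/- Under the assumptions that h : ℝ → ℝ is increasing and bi-Lipschitz with constants 0 < m ≤ M, define for probability measures ν with finite first moment: H(x, ν) = ∫ h(x+z) dν(z), Ḡ₀(ν) = inf{x : H(x,ν) ≥ 0}, and G₀(ν) = max(Ḡ₀(ν), 0) = inf{x ≥ 0 : H(x,ν) ≥ 0}. Then for any two such measures ν, ν′: |G₀(ν) − G₀(ν′)| ≤ (1/m) |∫ h(Ḡ₀(ν) + z)(dν(z) − dν′(z))|, and consequently |G₀(ν) − G₀(ν′)| ≤ (M/m) W₁(ν, ν′). -/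
open MeasureTheory

/-- The 1-Wasserstein distance on probability measures on `ℝ`. -/
noncomputable def W1 (μ ν : Measure ℝ) : ℝ :=
  sInf { r : ℝ | ∃ π : Measure (ℝ × ℝ), IsProbabilityMeasure π ∧
    π.map Prod.fst = μ ∧ π.map Prod.snd = ν ∧ r = ∫ p, |p.1 - p.2| ∂π }

/-- `H x ν = ∫ h (x + z) dν(z)`. -/
noncomputable def Hfun (h : ℝ → ℝ) (x : ℝ) (ν : Measure ℝ) : ℝ := ∫ z, h (x + z) ∂ν

/-- `Ḡ₀(ν) = inf {x : H(x, ν) ≥ 0}`. -/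
noncomputable def Gbar (h : ℝ → ℝ) (ν : Measure ℝ) : ℝ :=
  sInf { x : ℝ | 0 ≤ Hfun h x ν }

/-- `G₀(ν) = max (Ḡ₀(ν)) 0 = inf {x ≥ 0 : H(x, ν) ≥ 0}`. -/
noncomputable def G0 (h : ℝ → ℝ) (ν : Measure ℝ) : ℝ := max (Gbar h ν) 0

/-!
Since `h` is increasing and expands distances by at least `m`, so does `x ↦ H(x, ν)`, which is also
continuous; hence it has a unique zero, namely `Ḡ₀(ν)`. Expansion of `H(·, ν')` between its zero
`Ḡ₀(ν')` and `Ḡ₀(ν)`, together with `H(Ḡ₀(ν), ν) = 0`, gives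
`m |Ḡ₀(ν) - Ḡ₀(ν')| ≤ |H(Ḡ₀(ν), ν) - H(Ḡ₀(ν), ν')|`, and truncation at `0` is 1-Lipschitz.
For the Wasserstein bound, `z ↦ h(Ḡ₀(ν) + z)` is `M`-Lipschitz, so its integrals against the two
marginals of any coupling `π` differ by at most `M ∫ |p.1 - p.2| dπ`.
-/

open Set
open scoped NNReal

theorem LipschitzWith.comp_const_add {α β : Type*} [SeminormedAddGroup α] [PseudoEMetricSpace β]
    {K : ℝ≥0} {f : α → β} (hf : LipschitzWith K f) (x : α) :
    LipschitzWith K fun z => f (x + z) :=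
  fun a b => by simpa [edist_add_left] using hf (x + a) (x + b)

theorem LipschitzWith.integrable_of_integrable_abs {μ : Measure ℝ} [IsFiniteMeasure μ]
    {K : ℝ≥0} {f : ℝ → ℝ} (hf : LipschitzWith K f) (hμ : Integrable (fun z => |z|) μ) :
    Integrable f μ := by
  refine ((integrable_const |f 0|).add (hμ.const_mul K)).mono' hf.continuous.aestronglyMeasurable
    (ae_of_all _ fun z => ?_)
  have hz : |f z - f 0| ≤ K * |z| := by simpa [Real.dist_eq] using hf.dist_le_mul z 0
  have := abs_sub_abs_le_abs_sub (f z) (f 0)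
  rw [Real.norm_eq_abs]
  dsimp only [Pi.add_apply]
  linarith

theorem LipschitzWith.abs_integral_map_fst_sub_integral_map_snd_le {K : ℝ≥0} {f : ℝ → ℝ}
    (hf : LipschitzWith K f) {π : Measure (ℝ × ℝ)} (h₁ : Integrable f (π.map Prod.fst))
    (h₂ : Integrable f (π.map Prod.snd)) (hd : Integrable (fun p => |p.1 - p.2|) π) :
    |∫ z, f z ∂(π.map Prod.fst) - ∫ z, f z ∂(π.map Prod.snd)| ≤ K * ∫ p, |p.1 - p.2| ∂π := by
  have hf₁ : Integrable (fun p : ℝ × ℝ => f p.1) π := h₁.comp_measurable measurable_fst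
  have hf₂ : Integrable (fun p : ℝ × ℝ => f p.2) π := h₂.comp_measurable measurable_snd
  rw [integral_map measurable_fst.aemeasurable hf.continuous.aestronglyMeasurable,
    integral_map measurable_snd.aemeasurable hf.continuous.aestronglyMeasurable,
    ← integral_sub hf₁ hf₂, ← integral_const_mul]
  refine (abs_integral_le_integral_abs).trans
    (integral_mono (hf₁.sub hf₂).abs (hd.const_mul K) fun p => ?_)
  simpa [Real.dist_eq] using hf.dist_le_mul p.1 p.2

theorem LipschitzWith.abs_integral_sub_le_mul_W1 {K : ℝ≥0} {f : ℝ → ℝ} (hf : LipschitzWith K f)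
    {ν ν' : Measure ℝ} [IsProbabilityMeasure ν] [IsProbabilityMeasure ν']
    (hν : Integrable (fun z => |z|) ν) (hν' : Integrable (fun z => |z|) ν') :
    |∫ z, f z ∂ν - ∫ z, f z ∂ν'| ≤ K * W1 ν ν' := by
  set S := { r : ℝ | ∃ π : Measure (ℝ × ℝ), IsProbabilityMeasure π ∧
    π.map Prod.fst = ν ∧ π.map Prod.snd = ν' ∧ r = ∫ p, |p.1 - p.2| ∂π }
  have hS : S.Nonempty := ⟨_, ν.prod ν', inferInstance, by simp, by simp, rfl⟩
  rw [W1, ← smul_eq_mul, ← Real.sInf_smul_of_nonneg K.coe_nonneg]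
  refine le_csInf (hS.smul_set) ?_
  rintro _ ⟨_, ⟨π, hπ, rfl, rfl, rfl⟩, rfl⟩
  have hd : Integrable (fun p : ℝ × ℝ => |p.1 - p.2|) π := by
    refine ((hν.comp_measurable measurable_fst).add (hν'.comp_measurable measurable_snd)).mono'
      (by fun_prop) (ae_of_all _ fun p => ?_)
    simpa using abs_sub p.1 p.2
  exact hf.abs_integral_map_fst_sub_integral_map_snd_le (hf.integrable_of_integrable_abs hν)
    (hf.integrable_of_integrable_abs hν') hd


theorem mul_abs_sub_le_abs_sub_of_mul_sub_le {g : ℝ → ℝ} {m : ℝ}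
    (hg : ∀ x y, y ≤ x → m * (x - y) ≤ g x - g y) (x y : ℝ) :
    m * |x - y| ≤ |g x - g y| := by
  rcases le_total y x with hyx | hxy
  · rw [abs_of_nonneg (sub_nonneg.2 hyx)]
    exact (hg x y hyx).trans (le_abs_self _)
  · rw [abs_sub_comm, abs_sub_comm (g x), abs_of_nonneg (sub_nonneg.2 hxy)]
    exact (hg y x hxy).trans (le_abs_self _)

theorem exists_eq_zero_of_continuous_of_mul_sub_le {g : ℝ → ℝ} {m : ℝ} (hm : 0 < m)
    (hc : Continuous g)
    (hg : ∀ x y, y ≤ x → m * (x - y) ≤ g x - g y) : ∃ x, g x = 0 := by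
  set a := |g 0| / m
  have ha : 0 ≤ a := by positivity
  have hma : m * a = |g 0| := mul_div_cancel₀ _ hm.ne'
  have hlo : g (-a) ≤ 0 := by
    have := hg 0 (-a) (neg_nonpos.2 ha)
    linarith [le_abs_self (g 0)]
  have hhi : 0 ≤ g a := by
    have := hg a 0 ha
    linarith [neg_abs_le (g 0)]
  obtain ⟨x, -, hx⟩ := intermediate_value_Icc (neg_le_self ha) hc.continuousOn ⟨hlo, hhi⟩
  exact ⟨x, hx⟩

theorem StrictMono.sInf_setOf_nonneg {g : ℝ → ℝ} (hg : StrictMono g) {x : ℝ} (hx : g x = 0) :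
    sInf {y | 0 ≤ g y} = x := by
  have : {y | 0 ≤ g y} = Ici x := by
    ext y
    simp [← hx, hg.le_iff_le]
  rw [this, csInf_Ici]

section Hfun

variable {h : ℝ → ℝ} {K : ℝ≥0} {ν : Measure ℝ} [IsProbabilityMeasure ν]

theorem integrable_comp_const_add (hh : LipschitzWith K h) (hν : Integrable (fun z => |z|) ν)
    (x : ℝ) : Integrable (fun z => h (x + z)) ν :=
  (hh.comp_const_add x).integrable_of_integrable_abs hν

theorem lipschitzWith_Hfun (hh : LipschitzWith K h) (hν : Integrable (fun z => |z|) ν) :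
    LipschitzWith K fun x => Hfun h x ν := by
  refine LipschitzWith.of_dist_le_mul fun x y => ?_
  rw [Real.dist_eq, Hfun, Hfun, ← integral_sub (integrable_comp_const_add hh hν x)
    (integrable_comp_const_add hh hν y)]
  have hpt : ∀ z, ‖h (x + z) - h (y + z)‖ ≤ K * dist x y := fun z => by
    simpa [Real.dist_eq, dist_add_right] using hh.dist_le_mul (x + z) (y + z)
  simpa using norm_integral_le_of_norm_le_const (ae_of_all ν hpt)

theorem mul_sub_le_Hfun_sub_Hfun {m : ℝ} (hh : LipschitzWith K h)
    (hexp : ∀ x y, y ≤ x → m * (x - y) ≤ h x - h y) (hν : Integrable (fun z => |z|) ν)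
    {x y : ℝ} (hyx : y ≤ x) : m * (x - y) ≤ Hfun h x ν - Hfun h y ν := by
  rw [Hfun, Hfun, ← integral_sub (integrable_comp_const_add hh hν x)
    (integrable_comp_const_add hh hν y)]
  calc m * (x - y) = ∫ _, m * (x - y) ∂ν := by simp
    _ ≤ _ := integral_mono (integrable_const _)
      ((integrable_comp_const_add hh hν x).sub (integrable_comp_const_add hh hν y)) fun z => by
        simpa using hexp (x + z) (y + z) (by linarith)

theorem Hfun_Gbar_eq_zero {m : ℝ} (hm : 0 < m) (hh : LipschitzWith K h)
    (hexp : ∀ x y, y ≤ x → m * (x - y) ≤ h x - h y) (hν : Integrable (fun z => |z|) ν) :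
    Hfun h (Gbar h ν) ν = 0 := by
  have hH : ∀ x y, y ≤ x → m * (x - y) ≤ Hfun h x ν - Hfun h y ν :=
    fun _ _ => mul_sub_le_Hfun_sub_Hfun hh hexp hν
  obtain ⟨x, hx⟩ :=
    exists_eq_zero_of_continuous_of_mul_sub_le hm (lipschitzWith_Hfun hh hν).continuous hH
  have hmono : StrictMono fun x => Hfun h x ν := fun y x hyx => by
    nlinarith [hH x y hyx.le, mul_pos hm (sub_pos.2 hyx)]
  rw [Gbar, hmono.sInf_setOf_nonneg hx, hx]

end Hfun

theorem stmt_3 (h : ℝ → ℝ) (m M : ℝ) (hm : 0 < m) (hmM : m ≤ M)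
    (hmono : Monotone h)
    (hbil : ∀ x y : ℝ, m * |x - y| ≤ |h x - h y| ∧ |h x - h y| ≤ M * |x - y|)
    (ν ν' : Measure ℝ) [IsProbabilityMeasure ν] [IsProbabilityMeasure ν']
    (hint : Integrable (fun z : ℝ => |z|) ν)
    (hint' : Integrable (fun z : ℝ => |z|) ν') :
    |G0 h ν - G0 h ν'| ≤
      (1 / m) * |(∫ z, h (Gbar h ν + z) ∂ν) - ∫ z, h (Gbar h ν + z) ∂ν'| ∧
    |G0 h ν - G0 h ν'| ≤ (M / m) * W1 ν ν' := by
  have hM : 0 ≤ M := hm.le.trans hmM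
  have hLip : LipschitzWith M.toNNReal h := LipschitzWith.of_dist_le_mul fun x y => by
    simpa [Real.dist_eq, hM] using (hbil x y).2
  have hexp : ∀ x y, y ≤ x → m * (x - y) ≤ h x - h y := fun x y hyx => by
    simpa [abs_of_nonneg (sub_nonneg.2 hyx), abs_of_nonneg (sub_nonneg.2 (hmono hyx))]
      using (hbil x y).1
  set x := Gbar h ν
  have hx : Hfun h x ν = 0 := Hfun_Gbar_eq_zero hm hLip hexp hint
  have hx' : Hfun h (Gbar h ν') ν' = 0 := Hfun_Gbar_eq_zero hm hLip hexp hint'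
  have hfirst : |G0 h ν - G0 h ν'| ≤ 1 / m * |Hfun h x ν - Hfun h x ν'| := by
    rw [one_div_mul_eq_div, le_div_iff₀' hm]
    calc m * |G0 h ν - G0 h ν'| ≤ m * |x - Gbar h ν'| :=
          mul_le_mul_of_nonneg_left (abs_max_sub_max_le_abs _ _ _) hm.le
      _ ≤ |Hfun h x ν' - Hfun h (Gbar h ν') ν'| := mul_abs_sub_le_abs_sub_of_mul_sub_le
          (fun _ _ => mul_sub_le_Hfun_sub_Hfun hLip hexp hint') _ _
      _ = |Hfun h x ν - Hfun h x ν'| := by rw [hx, hx', sub_zero, zero_sub, abs_neg]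
  refine ⟨hfirst, hfirst.trans ?_⟩
  have hW1 := (hLip.comp_const_add x).abs_integral_sub_le_mul_W1 hint hint'
  rw [Real.coe_toNNReal _ hM] at hW1
  calc 1 / m * |Hfun h x ν - Hfun h x ν'| ≤ 1 / m * (M * W1 ν ν') := by gcongr; exact hW1
    _ = M / m * W1 ν ν' := by ring
end

section
/- Deterministic Skorokhod lemma in mean: let f : [0,∞) → ℝ be continuous with f(0) ≥ 0, and define k(t) = sup_{s ≤ t} max(−f(s), 0). Then k is nondecreasing, continuous, k(0) = 0, f(t) + k(t) ≥ 0 for all t ≥ 0, and the Stieltjes integral ∫₀^t (f(s) + k(s)) dk(s) = 0 for all t ≥ 0 (i.e. the measure dk is supported on the set {s : f(s) + k(s) = 0}). -/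
/-!
The reflection term is the running supremum of `g = max (-f) 0`. For continuous `g` with
`g 0 = 0` it is continuous, since rescaling `[0, t]` to `[0, 1]` makes it the supremum of a jointly
continuous function over a fixed compact set. Where `f + k > 0`, continuity gives a neighbourhood
of `x` on which `-f < k (x - ε)`, so `k` is constant there; these neighbourhoods carry no
`dk`-mass, and a countable subcover shows that `dk` is concentrated on `{f + k = 0}`.
-/

open MeasureTheory Set Filter Topology

noncomputable def runningSup (g : ℝ → ℝ) (t : ℝ) : ℝ :=
  sSup (g '' Icc 0 t)

section RunningSup

variable {g : ℝ → ℝ}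

theorem runningSup_of_neg {t : ℝ} (ht : t < 0) : runningSup g t = 0 := by
  rw [runningSup, Icc_eq_empty (not_le.2 ht), image_empty, Real.sSup_empty]

theorem runningSup_zero : runningSup g 0 = g 0 := by
  rw [runningSup, Icc_self, image_singleton, csSup_singleton]

theorem le_runningSup (hg : Continuous g) {s t : ℝ} (hs : 0 ≤ s) (hst : s ≤ t) :
    g s ≤ runningSup g t :=
  le_csSup (isCompact_Icc.bddAbove_image hg.continuousOn) (mem_image_of_mem g ⟨hs, hst⟩)

theorem runningSup_nonneg (hg0 : g 0 = 0) (t : ℝ) : 0 ≤ runningSup g t := by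
  rcases lt_or_ge t 0 with ht | ht
  · exact (runningSup_of_neg ht).ge
  · exact Real.sSup_nonneg' ⟨g 0, mem_image_of_mem g ⟨le_rfl, ht⟩, hg0.ge⟩

theorem runningSup_le {t c : ℝ} (h : ∀ s ∈ Icc 0 t, g s ≤ c) (hc : 0 ≤ c) :
    runningSup g t ≤ c :=
  Real.sSup_le (forall_mem_image.2 h) hc

theorem monotone_runningSup (hg : Continuous g) (hg0 : g 0 = 0) : Monotone (runningSup g) :=
  fun _ _ hab =>
    runningSup_le (fun _ hs => le_runningSup hg hs.1 (hs.2.trans hab)) (runningSup_nonneg hg0 _)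

theorem runningSup_eq_sSup_image_Icc_zero_one (hg0 : g 0 = 0) (t : ℝ) :
    runningSup g t = sSup ((fun s => g (s * max t 0)) '' Icc 0 1) := by
  have h : runningSup g (max t 0) = runningSup g t := by
    rcases lt_or_ge t 0 with ht | ht
    · rw [max_eq_right ht.le, runningSup_zero, hg0, runningSup_of_neg ht]
    · rw [max_eq_left ht]
  rw [← h, runningSup, ← image_image g (· * max t 0),
    image_mul_right_Icc zero_le_one (le_max_right t 0), zero_mul, one_mul]

theorem continuous_runningSup (hg : Continuous g) (hg0 : g 0 = 0) :
    Continuous (runningSup g) := by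
  simp_rw [funext (runningSup_eq_sSup_image_Icc_zero_one hg0)]
  exact isCompact_Icc.continuous_sSup (by fun_prop)

theorem runningSup_eq_of_forall_le (hg : Continuous g) (hg0 : g 0 = 0) {a b : ℝ} (hab : a ≤ b)
    (h : ∀ s ∈ Icc a b, g s ≤ runningSup g a) : runningSup g b = runningSup g a := by
  refine le_antisymm (runningSup_le (fun s hs => ?_) (runningSup_nonneg hg0 a))
    (monotone_runningSup hg hg0 hab)
  rcases le_or_gt s a with hsa | has
  · exact le_runningSup hg hs.1 hsa
  · exact h s ⟨has.le, hs.2⟩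

end RunningSup

theorem exists_runningSup_negPart_eq {f : ℝ → ℝ} (hf : Continuous f) (hf0 : 0 ≤ f 0) {x : ℝ}
    (hx : 0 < f x + runningSup (fun s => max (-f s) 0) x) :
    ∃ ε > 0, runningSup (fun s => max (-f s) 0) (x + ε) =
      runningSup (fun s => max (-f s) 0) (x - ε) := by
  set g : ℝ → ℝ := fun s => max (-f s) 0
  have hg : Continuous g := hf.neg.max continuous_const
  have hg0 : g 0 = 0 := max_eq_right (neg_nonpos.2 hf0)
  obtain ⟨c, hfxc, hckx⟩ := exists_between (show -f x < runningSup g x by linarith)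
  have hfc : ∀ᶠ s in 𝓝 x, -f s < c := hf.neg.continuousAt.eventually_lt continuousAt_const hfxc
  have hck : ∀ᶠ s in 𝓝 x, c < runningSup g s :=
    continuousAt_const.eventually_lt (continuous_runningSup hg hg0).continuousAt hckx
  obtain ⟨δ, hδ, hball⟩ := Metric.eventually_nhds_iff.1 (hfc.and hck)
  refine ⟨δ / 2, half_pos hδ, runningSup_eq_of_forall_le hg hg0 (by linarith) fun s hs => ?_⟩
  have hs' : dist s x < δ := by
    rw [Real.dist_eq, abs_lt]; constructor <;> linarith [hs.1, hs.2]
  have hx' : dist (x - δ / 2) x < δ := by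
    rw [Real.dist_eq, abs_lt]; constructor <;> linarith
  exact max_le ((hball hs').1.le.trans (hball hx').2.le) (runningSup_nonneg hg0 _)

theorem measure_eq_zero_of_locally_flat {k : ℝ → ℝ} {μ : Measure ℝ}
    (hμ : ∀ a b, a ≤ b → μ (Ioc a b) = ENNReal.ofReal (k b - k a)) {S : Set ℝ}
    (hS : ∀ x ∈ S, ∃ ε > 0, k (x + ε) = k (x - ε)) : μ S = 0 := by
  refine measure_null_of_locally_null S fun x hx => ?_
  obtain ⟨ε, hε, hflat⟩ := hS x hx
  refine ⟨Ioo (x - ε) (x + ε),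
    mem_nhdsWithin_of_mem_nhds (Ioo_mem_nhds (by linarith) (by linarith)), ?_⟩
  refine measure_mono_null Ioo_subset_Ioc_self ?_
  rw [hμ _ _ (by linarith), hflat, sub_self, ENNReal.ofReal_zero]

theorem stmt_5 (f : ℝ → ℝ) (hf : Continuous f) (hf0 : 0 ≤ f 0)
    (k : ℝ → ℝ)
    (hk : ∀ t : ℝ, k t = sSup ((fun s => max (-f s) 0) '' Set.Icc 0 t)) :
    Monotone k ∧ Continuous k ∧ k 0 = 0 ∧ (∀ t : ℝ, 0 ≤ t → 0 ≤ f t + k t) ∧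
    ∀ μ : MeasureTheory.Measure ℝ,
      (∀ a b : ℝ, a ≤ b → μ (Set.Ioc a b) = ENNReal.ofReal (k b - k a)) →
      (μ { s : ℝ | 0 ≤ s ∧ f s + k s ≠ 0 } = 0 ∧
        ∀ t : ℝ, 0 ≤ t → ∫ s in Set.Ioc 0 t, (f s + k s) ∂μ = 0) := by
  obtain rfl : k = runningSup (fun s => max (-f s) 0) := funext hk
  have hg : Continuous fun s => max (-f s) 0 := hf.neg.max continuous_const
  have hg0 : (fun s => max (-f s) 0) 0 = 0 := max_eq_right (neg_nonpos.2 hf0)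
  have hfk : ∀ t, 0 ≤ t → 0 ≤ f t + runningSup (fun s => max (-f s) 0) t := fun t ht => by
    linarith [le_runningSup hg ht le_rfl, le_max_left (-f t) 0]
  refine ⟨monotone_runningSup hg hg0, continuous_runningSup hg hg0, runningSup_zero.trans hg0,
    hfk, fun μ hμ => ?_⟩
  have hnull : μ {s | 0 ≤ s ∧ f s + runningSup (fun s => max (-f s) 0) s ≠ 0} = 0 :=
    measure_eq_zero_of_locally_flat hμ fun x hx =>
      exists_runningSup_negPart_eq hf hf0 ((hfk x hx.1).lt_of_ne' hx.2)
  refine ⟨hnull, fun t _ => setIntegral_eq_zero_of_ae_eq_zero ?_⟩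
  filter_upwards [measure_eq_zero_iff_ae_notMem.1 hnull] with s hs hst
  by_contra h
  exact hs ⟨hst.1.le, h⟩
end
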